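/- arXiv:2003.12000 — 5 statements merged into one kernel-verified Lean document; each statement's English description precedes it below -/
import Mathlib

section
/- Let M be a connected n-manifold with boundary ∂M. If the interior M − ∂M is metrisable and ∂M is collared in M, then ∂M is Lindelöf. -/
open Set Topology unitInterval

variable {X : Type*} [TopologicalSpace X]

/-- `h : B × [0,1] → X` is a collar of `B` in `X`: an embedding with `h(x,0) = x`,
`h⁻¹(B) = B × {0}`, and `h(B × [0,1))` open in `X`. -/
def IsCollarMap (B : Set X) (h : B × I → X) : Prop :=
  Topology.IsEmbedding h ∧ (∀ x : B, h (x, 0) = (x : X)) ∧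
    h ⁻¹' B = {p : B × I | p.2 = 0} ∧ IsOpen (h '' {p : B × I | p.2 < 1})

/-- `B` is collared in `X`. -/
def IsCollared (B : Set X) : Prop := ∃ h : B × I → X, IsCollarMap B h

/-- `B` is strongly collared in `X`: the collar map can be chosen to be a closed map. -/
def IsStronglyCollared (B : Set X) : Prop :=
  ∃ h : B × I → X, IsCollarMap B h ∧ IsClosedMap h

/-- `x` has a neighbourhood homeomorphic to `ℝ^{n-1} × ℝ_{≥0}`. -/
def HasBoundaryChart (n : ℕ) (x : X) : Prop :=
  ∃ U : Set X, U ∈ nhds x ∧ Nonempty (U ≃ₜ ((Fin (n - 1) → ℝ) × {r : ℝ // 0 ≤ r}))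

/-- `x` has a neighbourhood homeomorphic to `ℝⁿ`. -/
def HasInteriorChart (n : ℕ) (x : X) : Prop :=
  ∃ U : Set X, U ∈ nhds x ∧ Nonempty (U ≃ₜ (Fin n → ℝ))

/-- An `n`-manifold with boundary: a Hausdorff space such that every point has a neighbourhood
homeomorphic to `ℝ^{n-1} × ℝ_{≥0}` (Hausdorffness is a separate instance hypothesis). -/
def IsManifoldWithBoundary (n : ℕ) (M : Type*) [TopologicalSpace M] : Prop :=
  ∀ x : M, HasBoundaryChart n x

/-- The boundary `∂M`: the points with no neighbourhood homeomorphic to `ℝⁿ`. -/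
def mBoundary (n : ℕ) (M : Type*) [TopologicalSpace M] : Set M :=
  {x : M | ¬ HasInteriorChart n x}

/-!
The interior `Bᶜ` of `M` is open, hence locally compact, and it is connected: pushing every boundary
point `c` to the end `h (c, 1)` of its collar fibre turns a separation of `Bᶜ` into one of `M`.
A connected, locally compact, paracompact (here: metrisable) space is σ-compact, so `Bᶜ` is
second countable, and `c ↦ h (c, 1)` embeds `B` into `Bᶜ`.
-/

lemma isOpen_setOf_exists_mem_nhds (P : Set X → Prop) : IsOpen {x : X | ∃ U ∈ 𝓝 x, P U} :=
  isOpen_iff_mem_nhds.2 fun _ ⟨U, hU, hP⟩ =>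
    (eventually_mem_nhds_iff.2 hU).mono fun _ hy => ⟨U, hy, hP⟩

lemma isClosed_mBoundary (n : ℕ) (M : Type*) [TopologicalSpace M] : IsClosed (mBoundary n M) :=
  isOpen_compl_iff.1 <| by
    simp only [mBoundary, compl_ofPred, not_not]
    exact isOpen_setOf_exists_mem_nhds _

lemma exists_isCompact_mem_nhds_of_homeomorph {Y : Type*} [TopologicalSpace Y]
    [WeaklyLocallyCompactSpace Y] {x : X} {U : Set X} (hU : U ∈ 𝓝 x) (φ : U ≃ₜ Y) :
    ∃ K, IsCompact K ∧ K ∈ 𝓝 x := by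
  let x' : U := ⟨x, mem_of_mem_nhds hU⟩
  obtain ⟨L, hLc, hL⟩ := exists_compact_mem_nhds (φ x')
  have hmap : Filter.map (↑) (𝓝 x') = 𝓝 x :=
    IsEmbedding.subtypeVal.map_nhds_of_mem x' (by simpa using hU)
  refine ⟨(↑) '' (φ ⁻¹' L), (φ.isCompact_preimage.2 hLc).image continuous_subtype_val, ?_⟩
  rw [← hmap]
  exact Filter.image_mem_map (φ.continuous.continuousAt.preimage_mem_nhds hL)

lemma IsManifoldWithBoundary.weaklyLocallyCompactSpace {n : ℕ} {M : Type*} [TopologicalSpace M]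
    (hM : IsManifoldWithBoundary n M) : WeaklyLocallyCompactSpace M := by
  have : LocallyCompactSpace {r : ℝ // 0 ≤ r} := isClosed_Ici.locallyCompactSpace
  refine ⟨fun x => ?_⟩
  obtain ⟨U, hU, ⟨φ⟩⟩ := hM x
  exact exists_isCompact_mem_nhds_of_homeomorph hU φ

/-- The union of the iterates `g^[m] {x₀}` is clopen. -/
lemma sigmaCompactSpace_of_preconnected_of_compact_expansion [PreconnectedSpace X] (g : Set X → Set X)
    (hg : ∀ K, IsCompact K → IsCompact (g K))
    (hnhds : ∀ x, ∃ U ∈ 𝓝 x, ∀ K, IsCompact K → (U ∩ K).Nonempty → U ⊆ g K) :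
    SigmaCompactSpace X := by
  rcases isEmpty_or_nonempty X with hX | ⟨⟨x₀⟩⟩
  · infer_instance
  set K : ℕ → Set X := fun m => g^[m] {x₀}
  have hK : ∀ m, IsCompact (K m) := by
    intro m
    induction m with
    | zero => exact isCompact_singleton
    | succ m ih => simpa only [K, Function.iterate_succ_apply'] using hg _ ih
  have hnhds_union : ∀ x, (∀ U ∈ 𝓝 x, (U ∩ ⋃ m, K m).Nonempty) → ⋃ m, K m ∈ 𝓝 x := by
    intro x hx
    obtain ⟨U, hU, hUg⟩ := hnhds x
    obtain ⟨y, hyU, hyK⟩ := hx U hU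
    obtain ⟨m, hym⟩ := mem_iUnion.1 hyK
    refine Filter.mem_of_superset hU fun z hz => mem_iUnion.2 ⟨m + 1, ?_⟩
    rw [show K (m + 1) = g (K m) from Function.iterate_succ_apply' g m {x₀}]
    exact hUg (K m) (hK m) ⟨y, hyU, hym⟩ hz
  have hopen : IsOpen (⋃ m, K m) :=
    isOpen_iff_mem_nhds.2 fun x hx => hnhds_union x fun U hU => ⟨x, mem_of_mem_nhds hU, hx⟩
  have hclosed : IsClosed (⋃ m, K m) :=
    isClosed_of_closure_subset fun x hx =>
      mem_of_mem_nhds (hnhds_union x (mem_closure_iff_nhds.1 hx))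
  have huniv : ⋃ m, K m = univ :=
    IsClopen.eq_univ ⟨hclosed, hopen⟩ ⟨x₀, mem_iUnion.2 ⟨0, rfl⟩⟩
  exact SigmaCompactSpace_iff_exists_compact_covering.2 ⟨K, hK, huniv⟩

lemma exists_compact_expansion_of_paracompact [WeaklyLocallyCompactSpace X] [ParacompactSpace X] :
    ∃ g : Set X → Set X, (∀ K, IsCompact K → IsCompact (g K)) ∧
      ∀ x, ∃ U ∈ 𝓝 x, ∀ K, IsCompact K → (U ∩ K).Nonempty → U ⊆ g K := by
  choose L hLc hL using fun x : X => exists_compact_mem_nhds x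
  obtain ⟨v, hvo, hvcov, hvlf, hvL⟩ := precise_refinement (fun x => interior (L x))
    (fun x => isOpen_interior)
    (eq_univ_of_forall fun x => mem_iUnion.2 ⟨x, mem_interior_iff_mem_nhds.2 (hL x)⟩)
  refine ⟨fun K => ⋃ i ∈ {i | (v i ∩ K).Nonempty}, L i, fun K hK =>
    (hvlf.finite_nonempty_inter_compact hK).isCompact_biUnion fun i _ => hLc i, fun x => ?_⟩
  obtain ⟨i, hi⟩ := mem_iUnion.1 (hvcov.symm ▸ mem_univ x : x ∈ ⋃ i, v i)
  exact ⟨v i, (hvo i).mem_nhds hi, fun K _ hK =>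
    ((hvL i).trans interior_subset).trans (subset_biUnion_of_mem (u := L) hK)⟩

lemma sigmaCompactSpace_of_paracompact [PreconnectedSpace X] [WeaklyLocallyCompactSpace X]
    [ParacompactSpace X] : SigmaCompactSpace X :=
  let ⟨g, hg, hnhds⟩ := exists_compact_expansion_of_paracompact (X := X)
  sigmaCompactSpace_of_preconnected_of_compact_expansion g hg hnhds

open scoped Classical in
noncomputable def collarPushOff {α : Type*} {B : Set α} (h : B × I → α) (x : α) : α :=
  if hx : x ∈ B then h (⟨x, hx⟩, 1) else x

lemma collarPushOff_of_notMem {α : Type*} {B : Set α} {h : B × I → α} {x : α} (hx : x ∉ B) :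
    collarPushOff h x = x :=
  dif_neg hx

lemma collarPushOff_coe {α : Type*} {B : Set α} {h : B × I → α} (c : B) :
    collarPushOff h c = h (c, 1) :=
  dif_pos c.2

namespace IsCollarMap

variable {B : Set X} {h : B × I → X}

lemma apply_mem_iff (hc : IsCollarMap B h) (p : B × I) : h p ∈ B ↔ p.2 = 0 :=
  Set.ext_iff.1 hc.2.2.1 p

lemma apply_one_notMem (hc : IsCollarMap B h) (c : B) : h (c, 1) ∉ B := by
  rw [hc.apply_mem_iff]
  exact one_ne_zero

lemma isEmbedding_apply_one (hc : IsCollarMap B h) :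
    IsEmbedding (fun c : B => (⟨h (c, 1), hc.apply_one_notMem c⟩ : ↥Bᶜ)) :=
  (hc.1.comp (isEmbedding_prodMkLeft 1)).codRestrict Bᶜ hc.apply_one_notMem

lemma isOpen_image (hc : IsCollarMap B h) {W : Set (B × I)} (hW : IsOpen W)
    (hW1 : W ⊆ {p | p.2 < 1}) : IsOpen (h '' W) := by
  obtain ⟨O, hO, rfl⟩ := hc.1.isInducing.isOpen_iff.1 hW
  rw [← inter_eq_right.2 hW1, image_inter_preimage]
  exact hc.2.2.2.inter hO

/-- Each fibre `t ↦ h (c, t)`, `t ∈ (0, 1]`, is a connected subset of `Bᶜ`, so it cannot cross a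
separation `P, Q` of `Bᶜ`. -/
lemma apply_mem_iff_apply_one_mem (hc : IsCollarMap B h) {P Q : Set X} (hP : IsOpen P)
    (hQ : IsOpen Q) (hcov : Bᶜ ⊆ P ∪ Q) (hdisj : Bᶜ ∩ (P ∩ Q) = ∅) (c : B) {t : I}
    (ht : t ≠ 0) : h (c, t) ∈ P ↔ h (c, 1) ∈ P := by
  have hIoc : IsPreconnected {s : I | s ≠ 0} := by
    have : {s : I | s ≠ 0} = Ioc 0 1 := by ext s; simp [pos_iff_ne_zero, le_one']
    exact this ▸ isPreconnected_Ioc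
  have hfib : IsPreconnected ((fun s => h (c, s)) '' {s | s ≠ 0}) :=
    hIoc.image _ (hc.1.continuous.comp (Continuous.prodMk_right c)).continuousOn
  have hfibB : (fun s => h (c, s)) '' {s | s ≠ 0} ⊆ Bᶜ := by
    rintro _ ⟨s, hs, rfl⟩
    exact (hc.apply_mem_iff _).not.2 hs
  have hnotPQ : ∀ x ∈ Bᶜ, x ∈ Q → x ∉ P := fun x hxB hxQ hxP =>
    (eq_empty_iff_forall_notMem.1 hdisj) x ⟨hxB, hxP, hxQ⟩
  rcases isPreconnected_iff_subset_of_disjoint.1 hfib P Q hP hQ (hfibB.trans hcov)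
    (subset_empty_iff.1 fun x hx => hdisj.subset ⟨hfibB hx.1, hx.2⟩) with hsub | hsub
  · exact iff_of_true (hsub ⟨t, ht, rfl⟩) (hsub ⟨1, one_ne_zero, rfl⟩)
  · exact iff_of_false (hnotPQ _ (hfibB ⟨t, ht, rfl⟩) (hsub ⟨t, ht, rfl⟩))
      (hnotPQ _ (hc.apply_one_notMem c) (hsub ⟨1, one_ne_zero, rfl⟩))

lemma collarPushOff_notMem (hc : IsCollarMap B h) (x : X) :
    collarPushOff h x ∉ B := by
  by_cases hx : x ∈ B
  · exact collarPushOff_coe (h := h) ⟨x, hx⟩ ▸ hc.apply_one_notMem _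
  · rwa [collarPushOff_of_notMem hx]

lemma isOpen_preimage_collarPushOff (hc : IsCollarMap B h) (hB : IsClosed B)
    {P Q : Set X} (hP : IsOpen P) (hQ : IsOpen Q) (hcov : Bᶜ ⊆ P ∪ Q)
    (hdisj : Bᶜ ∩ (P ∩ Q) = ∅) : IsOpen (collarPushOff h ⁻¹' P) := by
  refine isOpen_iff_mem_nhds.2 fun x hx => ?_
  by_cases hxB : x ∈ B
  · let W : Set (B × I) := {p | p.2 < 1} ∩ (fun p => h (p.1, 1)) ⁻¹' P
    have hWo : IsOpen (h '' W) :=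
      hc.isOpen_image ((isOpen_lt continuous_snd continuous_const).inter
        (hP.preimage (hc.1.continuous.comp (continuous_fst.prodMk continuous_const))))
        inter_subset_left
    have hxW : x ∈ h '' W := by
      refine ⟨(⟨x, hxB⟩, 0), ⟨show (0 : I) < 1 from zero_lt_one, ?_⟩, hc.2.1 _⟩
      show h (⟨x, hxB⟩, 1) ∈ P
      rwa [← collarPushOff_coe (h := h) ⟨x, hxB⟩]
    refine Filter.mem_of_superset (hWo.mem_nhds hxW) ?_
    rintro _ ⟨⟨c, t⟩, ⟨-, hc1⟩, rfl⟩
    by_cases ht : t = 0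
    · subst ht
      simpa only [mem_preimage, hc.2.1, collarPushOff_coe] using hc1
    · rw [mem_preimage, collarPushOff_of_notMem ((hc.apply_mem_iff _).not.2 ht)]
      exact (hc.apply_mem_iff_apply_one_mem hP hQ hcov hdisj c ht).2 hc1
  · refine Filter.mem_of_superset ((hB.isOpen_compl.inter hP).mem_nhds ⟨hxB, ?_⟩) ?_
    · rwa [mem_preimage, collarPushOff_of_notMem hxB] at hx
    · rintro y ⟨hyB, hyP⟩
      rwa [mem_preimage, collarPushOff_of_notMem hyB]

/-- A separation of `Bᶜ` pulls back along the push-off to a separation of the whole space. -/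
lemma isPreconnected_compl [PreconnectedSpace X] (hc : IsCollarMap B h)
    (hB : IsClosed B) : IsPreconnected Bᶜ := by
  refine isPreconnected_iff_subset_of_disjoint.2 fun P Q hP hQ hcov hdisj => ?_
  have hsep := isPreconnected_iff_subset_of_disjoint.1 isPreconnected_univ
    (collarPushOff h ⁻¹' P) (collarPushOff h ⁻¹' Q)
    (hc.isOpen_preimage_collarPushOff hB hP hQ hcov hdisj)
    (hc.isOpen_preimage_collarPushOff hB hQ hP (union_comm P Q ▸ hcov)
      (inter_comm P Q ▸ hdisj))
    (fun x _ => hcov (hc.collarPushOff_notMem x))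
    (subset_empty_iff.1 fun x hx =>
      (hdisj.subset ⟨hc.collarPushOff_notMem x, hx.2⟩ : collarPushOff h x ∈ (∅ : Set X)))
  rcases hsep with hsub | hsub
  · exact Or.inl fun x hx => collarPushOff_of_notMem (h := h) hx ▸ hsub (mem_univ x)
  · exact Or.inr fun x hx => collarPushOff_of_notMem (h := h) hx ▸ hsub (mem_univ x)

end IsCollarMap

/-- If `M` is a connected `n`-manifold with boundary whose interior `M − ∂M` is metrisable
and `∂M` is collared in `M`, then `∂M` is Lindelöf. -/
theorem boundary_lindelof_of_collared (n : ℕ) (M : Type*) [TopologicalSpace M]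
    [T2Space M] [ConnectedSpace M] (hM : IsManifoldWithBoundary n M)
    (hint : TopologicalSpace.MetrizableSpace ↥((mBoundary n M)ᶜ))
    (hcoll : IsCollared (mBoundary n M)) :
    IsLindelof (mBoundary n M) := by
  set B := mBoundary n M
  obtain ⟨h, hc⟩ := hcoll
  rcases B.eq_empty_or_nonempty with hBe | ⟨b, hb⟩
  · exact hBe ▸ isLindelof_empty
  have hB : IsClosed B := isClosed_mBoundary n M
  have := hM.weaklyLocallyCompactSpace
  have : LocallyCompactSpace ↥Bᶜ := hB.isOpen_compl.locallyCompactSpace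
  let := TopologicalSpace.metrizableSpaceMetric ↥Bᶜ
  have : ConnectedSpace ↥Bᶜ := isConnected_iff_connectedSpace.1
    ⟨⟨h (⟨b, hb⟩, 1), hc.apply_one_notMem _⟩, hc.isPreconnected_compl hB⟩
  have : SigmaCompactSpace ↥Bᶜ := sigmaCompactSpace_of_paracompact
  have : SecondCountableTopology ↥B := hc.isEmbedding_apply_one.secondCountableTopology
  exact isLindelof_iff_lindelofSpace.2 inferInstance
end

section
/- Let X be a regular Hausdorff space and B a closed subset of X which is locally collared in X. Then B is locally strongly collared in X. -/
open Set Topology unitInterval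

variable {X : Type*} [TopologicalSpace X]

/-- `h : cl(U) × [0,1] → X` (with `U ⊆ B` and the closure taken in `B`) is a local collar
of `B` in `X`: an embedding with `h(x,0) = x`, `h⁻¹(B) = cl(U) × {0}`, and `h(U × [0,1))`
open in `X`. -/
def IsLocalCollarMap (B : Set X) (U : Set B) (h : closure U × I → X) : Prop :=
  Topology.IsEmbedding h ∧ (∀ x : closure U, h (x, 0) = ((x : B) : X)) ∧
    h ⁻¹' B = {p : closure U × I | p.2 = 0} ∧
    IsOpen (h '' {p : closure U × I | (p.1 : B) ∈ U ∧ p.2 < 1})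

/-- `B` is locally collared in `X`: there is a cover of `B` by sets open in `B`, each of
which admits a local collar. -/
def IsLocallyCollared (B : Set X) : Prop :=
  ∃ 𝒰 : Set (Set B), (∀ U ∈ 𝒰, IsOpen U) ∧ ⋃₀ 𝒰 = univ ∧
    ∀ U ∈ 𝒰, ∃ h : closure U × I → X, IsLocalCollarMap B U h


/-- `B` is locally strongly collared in `X`: there is a cover of `B` by sets open in `B`,
each of which admits a local collar that is moreover a closed map. -/
def IsLocallyStronglyCollared (B : Set X) : Prop :=
  ∃ 𝒰 : Set (Set B), (∀ U ∈ 𝒰, IsOpen U) ∧ ⋃₀ 𝒰 = univ ∧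
    ∀ U ∈ 𝒰, ∃ h : closure U × I → X, IsLocalCollarMap B U h ∧ IsClosedMap h

/-!
Let `x ∈ U` with local collar `h`. By regularity of `X`, the open set `h(U × [0,1))` contains a
closed neighbourhood `C` of `x`; continuity of `h` at `(x, 0)` and regularity of `B` then give an
open `V ∋ x` in `B` and `s > 0` with `h(cl V × [0,s]) ⊆ C`. The map `g(y, t) = h(y, s t)` is a
local collar of `V`, and its image is closed in `range h` with closure inside `C ⊆ range h`, hence
closed in `X`; so `g` is a closed embedding.
-/

namespace unitInterval

theorem isClosedEmbedding_mul_left {s : I} (hs : s ≠ 0) : IsClosedEmbedding (s * · : I → I) :=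
  (continuous_const_mul s).isClosedEmbedding fun _ _ h => mul_left_cancel₀ hs h

theorem image_mul_left_Iio_one {s : I} (hs : s ≠ 0) : (s * ·) '' Iio 1 = Iio s := by
  have hs₀ : (0 : ℝ) < s := lt_of_le_of_ne s.2.1 (Subtype.coe_ne_coe.2 hs.symm)
  ext t
  constructor
  · rintro ⟨u, hu, rfl⟩
    exact mul_lt_of_lt_one_right (pos_iff_ne_zero.2 hs) hu
  · intro ht
    have ht' : (t : ℝ) < s := ht
    refine ⟨⟨t / s, div_nonneg t.2.1 hs₀.le, (div_le_one hs₀).2 ht'.le⟩,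
      mem_Iio.2 (Subtype.coe_lt_coe.1 ((div_lt_one hs₀).2 ht')), Subtype.ext ?_⟩
    exact mul_div_cancel₀ (t : ℝ) hs₀.ne'

end unitInterval

theorem Topology.IsInducing.isOpen_image_of_subset {Z : Type*} [TopologicalSpace Z] {f : Z → X}
    (hf : IsInducing f) {s t : Set Z} (hs : IsOpen s) (hst : s ⊆ t) (ht : IsOpen (f '' t)) :
    IsOpen (f '' s) := by
  obtain ⟨G, hG, rfl⟩ := hf.isOpen_iff.1 hs
  convert hG.inter ht using 1
  ext y
  constructor
  · rintro ⟨z, hz, rfl⟩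
    exact ⟨hz, mem_image_of_mem f (hst hz)⟩
  · rintro ⟨hy, z, -, rfl⟩
    exact ⟨z, hy, rfl⟩

theorem Topology.IsInducing.isClosed_image_of_closure_subset_range {Z : Type*}
    [TopologicalSpace Z] {f : Z → X} (hf : IsInducing f) {s : Set Z} (hs : IsClosed s)
    (h : closure (f '' s) ⊆ range f) : IsClosed (f '' s) := by
  refine closure_subset_iff_isClosed.1 fun y hy => ?_
  obtain ⟨z, rfl⟩ := h hy
  rw [← hs.closure_eq, hf.closure_eq_preimage_closure_image]
  exact mem_image_of_mem f hy

namespace IsLocalCollarMap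

variable {B : Set X} {U V : Set B} {h : closure U × I → X}

theorem comp_inclusion_mul (hh : IsLocalCollarMap B U h) (hV : IsOpen V) (hVU : V ⊆ U)
    {s : I} (hs : s ≠ 0) :
    IsLocalCollarMap B V (h ∘ Prod.map (inclusion (closure_mono hVU)) (s * ·)) := by
  obtain ⟨hemb, hzero, hpre, hopen⟩ := hh
  refine ⟨hemb.comp ((IsEmbedding.inclusion _).prodMap
    (unitInterval.isClosedEmbedding_mul_left hs).isEmbedding), fun y => ?_, ?_, ?_⟩
  · simp [hzero]
  · ext ⟨y, t⟩
    simp [preimage_comp, hpre, hs]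
  · have hT : Prod.map (inclusion (closure_mono hVU)) (s * ·) ''
        {p : closure V × I | (p.1 : B) ∈ V ∧ p.2 < 1} =
        {q : closure U × I | (q.1 : B) ∈ V ∧ q.2 < s} := by
      ext ⟨z, t⟩
      simp only [mem_image, mem_ofPred_eq, Prod.exists, Prod.map, Prod.mk.injEq]
      constructor
      · rintro ⟨y, u, ⟨hy, hu⟩, rfl, rfl⟩
        exact ⟨hy, (unitInterval.image_mul_left_Iio_one hs).subset (mem_image_of_mem _ hu)⟩
      · rintro ⟨hz, ht⟩
        obtain ⟨u, hu, rfl⟩ := (unitInterval.image_mul_left_Iio_one hs).superset ht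
        exact ⟨⟨z, subset_closure hz⟩, u, ⟨hz, hu⟩, rfl, rfl⟩
    rw [image_comp, hT]
    refine hemb.isInducing.isOpen_image_of_subset ?_
      (fun q hq => And.intro (hVU hq.1) (hq.2.trans_le le_one')) hopen
    exact (hV.preimage (continuous_subtype_val.comp continuous_fst)).inter
      (isOpen_Iio.preimage continuous_snd)

theorem exists_closure_image_subset_range [RegularSpace X] (hh : IsLocalCollarMap B U h)
    (hU : IsOpen U) {x : B} (hx : x ∈ U) :
    ∃ V : Set B, IsOpen V ∧ x ∈ V ∧ V ⊆ U ∧ ∃ s : I, s ≠ 0 ∧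
      closure (h '' {p | (p.1 : B) ∈ closure V ∧ p.2 ≤ s}) ⊆ range h := by
  obtain ⟨hemb, hzero, -, hopen⟩ := hh
  set x' : closure U := ⟨x, subset_closure hx⟩
  obtain ⟨C, hC, hCc, hCW⟩ := exists_mem_nhds_isClosed_subset
    (hopen.mem_nhds ⟨(x', 0), ⟨hx, zero_lt_one⟩, hzero x'⟩)
  obtain ⟨N, hN, v, hv, hNv⟩ :=
    mem_nhds_prod_iff.1 (hemb.continuous.continuousAt (x := (x', 0)) (by rwa [hzero x']))
  obtain ⟨N', hN', hN'N⟩ := (mem_nhds_subtype _ _ _).1 hN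
  obtain ⟨u, hu, huv⟩ := exists_Ico_subset_of_mem_nhds hv ⟨1, zero_lt_one⟩
  obtain ⟨s, hs, hsu⟩ := exists_between hu
  obtain ⟨t, ht, htc, htUN⟩ :=
    exists_mem_nhds_isClosed_subset (Filter.inter_mem (hU.mem_nhds hx) hN')
  have hVt : closure (interior t) ⊆ U ∩ N' := (closure_minimal interior_subset htc).trans htUN
  refine ⟨interior t, isOpen_interior, mem_interior_iff_mem_nhds.2 ht,
    interior_subset.trans (htUN.trans inter_subset_left), s, hs.ne', ?_⟩
  refine (closure_minimal ?_ hCc).trans (hCW.trans (image_subset_range _ _))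
  rintro _ ⟨p, ⟨hp₁, hp₂⟩, rfl⟩
  exact hNv ⟨hN'N (hVt hp₁).2, huv ⟨bot_le, hp₂.trans_lt hsu⟩⟩

theorem exists_isClosedMap [RegularSpace X] (hh : IsLocalCollarMap B U h) (hU : IsOpen U)
    {x : B} (hx : x ∈ U) :
    ∃ V : Set B, IsOpen V ∧ x ∈ V ∧
      ∃ g : closure V × I → X, IsLocalCollarMap B V g ∧ IsClosedMap g := by
  obtain ⟨V, hV, hxV, hVU, s, hs, hcl⟩ := hh.exists_closure_image_subset_range hU hx
  set j := Prod.map (inclusion (closure_mono hVU)) (s * · : I → I)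
  have hj : IsClosedEmbedding j :=
    (IsClosedEmbedding.inclusion _ (isClosed_closure.preimage continuous_subtype_val)).prodMap
      (unitInterval.isClosedEmbedding_mul_left hs)
  have hjK : range j ⊆ {p | (p.1 : B) ∈ closure V ∧ p.2 ≤ s} := by
    rintro _ ⟨⟨y, t⟩, rfl⟩
    exact ⟨y.2, unitInterval.mul_le_left⟩
  have hg := hh.comp_inclusion_mul hV hVU hs
  refine ⟨V, hV, hxV, h ∘ j, hg, (IsClosedEmbedding.mk hg.1 ?_).isClosedMap⟩
  rw [range_comp]
  exact hh.1.isInducing.isClosed_image_of_closure_subset_range hj.isClosed_range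
    ((closure_mono (image_mono hjK)).trans hcl)

end IsLocalCollarMap

theorem locallyStronglyCollared_of_locallyCollared_general {Y : Type*} [TopologicalSpace Y]
    [RegularSpace Y] (B : Set Y)
    (hlc : IsLocallyCollared B) :
    IsLocallyStronglyCollared B := by
  obtain ⟨𝒰, h𝒰o, h𝒰, hcol⟩ := hlc
  refine ⟨{V | IsOpen V ∧ ∃ g : closure V × I → Y, IsLocalCollarMap B V g ∧ IsClosedMap g},
    fun V hV => hV.1, eq_univ_of_forall fun x => ?_, fun V hV => hV.2⟩
  obtain ⟨U, hU, hxU⟩ := mem_sUnion.1 (h𝒰 ▸ mem_univ x)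
  obtain ⟨h, hh⟩ := hcol U hU
  obtain ⟨V, hV, hxV, hg⟩ := hh.exists_isClosedMap (h𝒰o U hU) hxU
  exact ⟨V, ⟨hV, hg⟩, hxV⟩

/-- If `B` is a closed, locally collared subset of a regular Hausdorff space `X`, then `B` is
locally strongly collared in `X`. -/
theorem locallyStronglyCollared_of_locallyCollared {Y : Type*} [TopologicalSpace Y]
    [T2Space Y] [RegularSpace Y] (B : Set Y) (hB : IsClosed B)
    (hlc : IsLocallyCollared B) :
    IsLocallyStronglyCollared B :=
  locallyStronglyCollared_of_locallyCollared_general B hlc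
end

section
/- Let X be a ccc Hausdorff space and B a closed subset of X which is locally connected in the subspace topology. If B has uncountably many connected components, then B is not collared in X. -/
open Set Topology unitInterval

variable {X : Type*} [TopologicalSpace X]

/-- A topological space is ccc if every family of pairwise disjoint nonempty open subsets
is at most countable. -/
def CCCSpace (Y : Type*) [TopologicalSpace Y] : Prop :=
  ∀ 𝒮 : Set (Set Y), (∀ U ∈ 𝒮, IsOpen U ∧ U.Nonempty) → 𝒮.PairwiseDisjoint id →
    𝒮.Countable

/-!
A collar `h` embeds `B × [0,1)` onto an open subset of `X`, so `B × [0,1)` and hence `B` are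
ccc. In a locally connected space the connected components are pairwise disjoint nonempty open
sets, so a ccc locally connected space has only countably many of them.
-/

namespace CCCSpace

variable {Y Z : Type*} [TopologicalSpace Y] [TopologicalSpace Z]

theorem of_injective_setMap (hY : CCCSpace Y) (g : Set Z → Set Y) (hg : Function.Injective g)
    (hg_open : ∀ U, IsOpen U → U.Nonempty → IsOpen (g U) ∧ (g U).Nonempty)
    (hg_disj : ∀ U V, Disjoint U V → Disjoint (g U) (g V)) : CCCSpace Z := by
  intro 𝒮 h𝒮 hdisj
  refine countable_of_injective_of_countable_image hg.injOn (hY _ ?_ ?_)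
  · rintro _ ⟨U, hU, rfl⟩
    exact hg_open U (h𝒮 U hU).1 (h𝒮 U hU).2
  · rintro _ ⟨U, hU, rfl⟩ _ ⟨V, hV, rfl⟩ hne
    exact hg_disj U V (hdisj hU hV fun hUV => hne (congrArg g hUV))

theorem of_isOpenEmbedding (hY : CCCSpace Y) {f : Z → Y} (hf : IsOpenEmbedding f) :
    CCCSpace Z :=
  hY.of_injective_setMap (image f) (image_injective.mpr hf.injective)
    (fun _ hU hne => ⟨hf.isOpenMap _ hU, hne.image f⟩)
    (fun _ _ h => (disjoint_image_iff hf.injective).mpr h)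

theorem of_prod_left {T : Type*} [TopologicalSpace T] [Nonempty T] (h : CCCSpace (Z × T)) :
    CCCSpace Z :=
  h.of_injective_setMap (preimage Prod.fst) (preimage_injective.mpr Prod.fst_surjective)
    (fun _ hU hne => ⟨hU.preimage continuous_fst, hne.preimage Prod.fst_surjective⟩)
    (fun _ _ h => h.preimage Prod.fst)

theorem countable_connectedComponents [LocallyConnectedSpace Z] (hZ : CCCSpace Z) :
    {C : Set Z | ∃ x, C = connectedComponent x}.Countable := by
  refine hZ _ ?_ ?_
  · rintro _ ⟨x, rfl⟩
    exact ⟨isOpen_connectedComponent, connectedComponent_nonempty⟩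
  · rintro _ ⟨x, rfl⟩ _ ⟨y, rfl⟩ hne
    exact connectedComponent_disjoint hne

end CCCSpace

theorem IsCollarMap.isOpenEmbedding_restrict_Iio {B : Set X} {h : B × I → X}
    (hh : IsCollarMap B h) : IsOpenEmbedding (h ∘ Prod.map id ((↑) : Iio (1 : I) → I)) := by
  obtain ⟨hemb, -, -, hopen⟩ := hh
  have hincl : IsOpenEmbedding (Prod.map (id : B → B) ((↑) : Iio (1 : I) → I)) :=
    IsOpenEmbedding.id.prodMap isOpen_Iio.isOpenEmbedding_subtypeVal
  refine (isOpenEmbedding_iff _).mpr ⟨hemb.comp hincl.isEmbedding, ?_⟩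
  rw [range_comp, range_prodMap, range_id, Subtype.range_coe]
  convert hopen using 2
  ext p
  simp

theorem not_collared_of_uncountably_many_components_general {Y : Type*} [TopologicalSpace Y]
    (hccc : CCCSpace Y) (B : Set Y)
    [LocallyConnectedSpace ↥B]
    (huncount : ¬ {C : Set ↥B | ∃ x, C = connectedComponent x}.Countable) :
    ¬ IsCollared B := by
  rintro ⟨h, hh⟩
  have : Nonempty (Iio (1 : I)) := ⟨⟨0, by simp⟩⟩
  exact huncount
    ((hccc.of_isOpenEmbedding hh.isOpenEmbedding_restrict_Iio).of_prod_left
      |>.countable_connectedComponents)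

/-- If `X` is a ccc Hausdorff space and `B ⊆ X` is closed, locally connected in the subspace
topology, and has uncountably many connected components, then `B` is not collared in `X`. -/
theorem not_collared_of_uncountably_many_components {Y : Type*} [TopologicalSpace Y]
    [T2Space Y] (hccc : CCCSpace Y) (B : Set Y) (hB : IsClosed B)
    [LocallyConnectedSpace ↥B]
    (huncount : ¬ {C : Set ↥B | ∃ x, C = connectedComponent x}.Countable) :
    ¬ IsCollared B :=
  not_collared_of_uncountably_many_components_general hccc B huncount
end

section
/- Let L₊ be the open long ray. If U is an open subset of L₊ × L₊ such that {α ∈ ω₁ : ⟨α,α⟩ ∈ U} is stationary in ω₁, then there is α ∈ ω₁ such that U contains [α,ω₁) × [α,ω₁), where [α,ω₁) denotes the set of points of L₊ that are ≥ α. -/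
/-! Suppose not, and choose for each `α` a pair `(xα, yα) ∉ U` above `α`, together with a bound
`g α > α` for both coordinates. The points closed under `g` form a club, so stationarity yields
such a `λ` with `(λ, λ) ∈ U`. As `U` is open it contains a square `(m, λ]²`; for `a = g μ < λ`,
where `μ` is the ordinal part of `m`, the pair `(xa, ya)` lies in this square, a contradiction. -/

open Set Topology

noncomputable section

def omega1 : Ordinal := (Cardinal.aleph 1).ord

abbrev Omega1 := ↥(Set.Iio omega1)

abbrev ClosedLongRay := Omega1 ×ₗ ↥(Set.Ico (0 : ℝ) 1)

instance : TopologicalSpace ClosedLongRay := Preorder.topology ClosedLongRay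
instance : OrderTopology ClosedLongRay := ⟨rfl⟩

theorem omega1_pos : (0 : Ordinal) < omega1 := by
  rw [omega1, ← Cardinal.ord_zero]
  exact Cardinal.ord_lt_ord.mpr (Cardinal.aleph_pos 1)

def longRayZero : ClosedLongRay :=
  toLex (⟨0, omega1_pos⟩, ⟨0, by norm_num⟩)

abbrev LongRayPlus := {x : ClosedLongRay // x ≠ longRayZero}

def ordPt (α : Omega1) : ClosedLongRay := toLex (α, ⟨0, by norm_num⟩)

/-- A subset of `ω₁` is closed and unbounded (club) if it is unbounded and contains every
nonzero ordinal which is a limit of its elements. -/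
def Omega1IsClub (C : Set Omega1) : Prop :=
  (∀ α : Omega1, ∃ β ∈ C, α < β) ∧
    ∀ α : Omega1, 0 < α.1 → (∀ β : Omega1, β < α → ∃ γ ∈ C, β < γ ∧ γ < α) → α ∈ C

/-- A subset of `ω₁` is stationary if it meets every club subset of `ω₁`. -/
def Omega1IsStationary (S : Set Omega1) : Prop :=
  ∀ C : Set Omega1, Omega1IsClub C → (S ∩ C).Nonempty

open Ordinal Cardinal Order

theorem Cardinal.IsRegular.exists_closure_point_gt {κ : Cardinal} (hκ : κ.IsRegular)
    (hκ₀ : κ ≠ ℵ₀) {g : Ordinal → Ordinal} (hg : ∀ β < κ.ord, g β < κ.ord) {α : Ordinal}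
    (hα : α < κ.ord) : ∃ l, α < l ∧ l < κ.ord ∧ ∀ β < l, g β < l := by
  set F : Ordinal → Ordinal := fun o => ⨆ β : Iio o, g β + 1
  have hF : ∀ β o, β < o → g β < F o := fun β o h =>
    (lt_add_one _).trans_le (Ordinal.le_iSup (fun β : Iio o => g β + 1) ⟨β, h⟩)
  refine ⟨nfp F (α + 1), (lt_add_one α).trans_le (le_nfp F _), ?_, fun β hβ => ?_⟩
  · refine nfp_lt_ord (by rw [hκ.cof_ord]; exact hκ.aleph0_le.lt_of_ne' hκ₀) (fun o ho => ?_)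
      ((isSuccLimit_ord hκ.aleph0_le).add_one_lt hα)
    apply lift_iSup_add_one_lt_of_lt_cof
    · rw [mk_Iio_ordinal, ← lift_cof, hκ.cof_ord, Cardinal.lift_lift, Cardinal.lift_lt]
      exact lt_ord.1 ho
    · exact fun β => hg β (β.2.trans ho)
  · obtain ⟨n, hn⟩ := lt_nfp_iff.1 hβ
    refine (hF β _ hn).trans_le ?_
    simpa only [Function.iterate_succ_apply'] using iterate_le_nfp F (α + 1) (n + 1)

instance : NoMaxOrder Omega1 :=
  ⟨fun α => ⟨⟨α.1 + 1, (isSuccLimit_ord (aleph0_le_aleph 1)).add_one_lt α.2⟩, lt_add_one α.1⟩⟩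

theorem omega1IsClub_setOf_forall_lt (g : Omega1 → Omega1) :
    Omega1IsClub {l | ∀ β < l, g β < l} := by
  refine ⟨fun α => ?_, fun α _ hα β hβ => ?_⟩
  · let G : Ordinal → Ordinal := fun o => if h : o < omega1 then g ⟨o, h⟩ else 0
    obtain ⟨l, hαl, hl, hGl⟩ := isRegular_aleph_one.exists_closure_point_gt
      aleph0_lt_aleph_one.ne' (g := G)
      (fun β hβ => by simp only [G, dif_pos (show β < omega1 from hβ)]; exact (g ⟨β, hβ⟩).2) α.2
    refine ⟨⟨l, hl⟩, fun β hβ => ?_, hαl⟩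
    have hβl := hGl β hβ
    simp only [G, dif_pos (show β.1 < omega1 from β.2)] at hβl
    exact hβl
  · obtain ⟨γ, hγ, hβγ, hγα⟩ := hα β hβ
    exact (hγ β hβγ).trans hγα

theorem lt_ordPt_iff {x : ClosedLongRay} {α : Omega1} : x < ordPt α ↔ (ofLex x).1 < α := by
  rw [← toLex_ofLex x, ordPt, Prod.Lex.toLex_lt_toLex]
  exact or_iff_left fun h => (ofLex x).2.2.1.not_gt h.2

theorem ordPt_strictMono : StrictMono ordPt := fun _ _ h => lt_ordPt_iff.2 h

theorem longRayZero_le (x : ClosedLongRay) : longRayZero ≤ x := by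
  rw [← toLex_ofLex x, longRayZero, Prod.Lex.toLex_le_toLex]
  rcases eq_zero_or_pos (ofLex x).1.1 with h | h
  · exact Or.inr ⟨Subtype.ext h.symm, (ofLex x).2.2.1⟩
  · exact Or.inl h

section OrderTopology

variable {X : Type*} [LinearOrder X] [TopologicalSpace X] [OrderTopology X] {P : X → Prop}

theorem exists_Ioc_subset_of_isOpen_subtype (hP : IsOpen {x | P x}) {V : Set (Subtype P)}
    (hV : IsOpen V) {p : Subtype P} (hp : p ∈ V) (hbot : ∃ b, b < p.1) :
    ∃ m < p.1, ∀ x : Subtype P, x.1 ∈ Ioc m p.1 → x ∈ V := by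
  obtain ⟨m, hm, hsub⟩ := exists_Ioc_subset_of_mem_nhds
    ((hP.isOpenMap_subtype_val V hV).mem_nhds ⟨p, hp, rfl⟩) hbot
  refine ⟨m, hm, fun x hx => ?_⟩
  obtain ⟨v, hv, hvx⟩ := hsub hx
  exact Subtype.ext hvx ▸ hv

theorem exists_Ioc_prod_subset_of_isOpen_subtype (hP : IsOpen {x | P x})
    {U : Set (Subtype P × Subtype P)} (hU : IsOpen U) {p : Subtype P} (hp : (p, p) ∈ U)
    (hbot : ∃ b, b < p.1) :
    ∃ m < p.1, ∀ x y : Subtype P, x.1 ∈ Ioc m p.1 → y.1 ∈ Ioc m p.1 → (x, y) ∈ U := by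
  obtain ⟨V, W, hV, hW, hpV, hpW, hVW⟩ := isOpen_prod_iff.1 hU p p hp
  obtain ⟨m₁, hm₁, hV⟩ := exists_Ioc_subset_of_isOpen_subtype hP hV hpV hbot
  obtain ⟨m₂, hm₂, hW⟩ := exists_Ioc_subset_of_isOpen_subtype hP hW hpW hbot
  refine ⟨max m₁ m₂, max_lt hm₁ hm₂, fun x y hx hy => hVW ⟨hV x ?_, hW y ?_⟩⟩
  · exact ⟨(le_max_left _ _).trans_lt hx.1, hx.2⟩
  · exact ⟨(le_max_right _ _).trans_lt hy.1, hy.2⟩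

end OrderTopology

/-- If `U` is an open subset of `L₊ × L₊` whose intersection with the diagonal is stationary
in `ω₁`, then `U` contains `[α,ω₁) × [α,ω₁)` for some `α ∈ ω₁`. -/
theorem open_superset_of_stationary_diagonal (U : Set (LongRayPlus × LongRayPlus))
    (hU : IsOpen U)
    (hstat : Omega1IsStationary
      {α : Omega1 | ∃ h : ordPt α ≠ longRayZero, (⟨ordPt α, h⟩, ⟨ordPt α, h⟩) ∈ U}) :
    ∃ α : Omega1, ∀ x y : LongRayPlus,
      ordPt α ≤ x.1 → ordPt α ≤ y.1 → (x, y) ∈ U := by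
  by_contra! hcon
  choose X Y hX hY hXY using hcon
  have hbound : ∀ α, ∃ γ, α < γ ∧ (X α).1 < ordPt γ ∧ (Y α).1 < ordPt γ := fun α => by
    obtain ⟨γ, hγ⟩ := exists_gt (max α (max (ofLex (X α).1).1 (ofLex (Y α).1).1))
    simp only [max_lt_iff] at hγ
    exact ⟨γ, hγ.1, lt_ordPt_iff.2 hγ.2.1, lt_ordPt_iff.2 hγ.2.2⟩
  choose g hg hXg hYg using hbound
  obtain ⟨l, ⟨hl₀, hlU⟩, hl⟩ := hstat _ (omega1IsClub_setOf_forall_lt g)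
  obtain ⟨m, hm, hmU⟩ := exists_Ioc_prod_subset_of_isOpen_subtype isOpen_ne hU hlU
    ⟨_, (longRayZero_le _).lt_of_ne' hl₀⟩
  set a := g (ofLex m).1
  have hma : m < ordPt a := lt_ordPt_iff.2 (hg _)
  have hgl : ordPt (g a) ≤ ordPt l :=
    ordPt_strictMono.monotone (hl a (hl _ (lt_ordPt_iff.1 hm))).le
  exact hXY a (hmU _ _ ⟨hma.trans_le (hX a), (hXg a).le.trans hgl⟩
    ⟨hma.trans_le (hY a), (hYg a).le.trans hgl⟩)
end
end

section
/- Let L_{≥0} be the closed long ray and L₊ the open long ray. Then the product spaces L₊ × ℝ, L_{≥0} × ℝ, L₊ × L₊, and L_{≥0} × L_{≥0} are all normal. -/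
open Set Topology

noncomputable section

open Filter

/-!
The closed long ray `L` is a conditionally complete linear order in which every countable set is
bounded above. Hence `L` is countably compact, and every initial segment `[0, b]` is a compact,
separable, hence metrizable, ordered space.

If `X` is normal and countably compact and `M` is compact metric, then two disjoint closed sets of
`X × M` have fibres at a uniform positive distance (countable compactness applied to the open sets
of points where the gap exceeds `1 / (n + 1)`); covering `M` by finitely many small balls then
reduces the separation to finitely many separations in `X`. So `L × [0, b]` and `L × EReal` are
normal.

For `L × L`, closing off under a choice of witnesses shows that if two closed sets both meet every
square `[c, ω₁)²`, they share a diagonal point. So one of two disjoint closed sets lies in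
`[0, b] × L ∪ L × [0, b]`, and each of these pieces is separated from the other set inside a
copy of `L × [0, b']`.

The remaining products are `Fσ` subspaces of these (`ℝ = ⋃ [-n, n]` in `EReal`,
`L₊ = ⋃ [1 / (n + 2), ω₁)` in `L`), and an `Fσ` subspace of a normal space is normal.
-/

section NormalSubspaces

variable {X Y : Type*} [TopologicalSpace X] [TopologicalSpace Y]

theorem hasSeparatingCover_of_subset_iUnion [NormalSpace X] {F : ℕ → Set X}
    (hF : ∀ n, IsClosed (F n)) {s t : Set X} (hs : s ⊆ ⋃ n, F n)
    (hst : Disjoint (closure s ∩ ⋃ n, F n) (closure t)) : HasSeparatingCover s t := by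
  have h : ∀ n, ∃ u, IsOpen u ∧ closure s ∩ F n ⊆ u ∧ closure u ⊆ (closure t)ᶜ := fun n =>
    normal_exists_closure_subset (isClosed_closure.inter (hF n)) isClosed_closure.isOpen_compl
      fun x hx => disjoint_left.1 hst ⟨hx.1, mem_iUnion.2 ⟨n, hx.2⟩⟩
  choose u hu hsu hut using h
  refine ⟨u, fun x hx => ?_, fun n => ⟨hu n, disjoint_left.2 fun x hx hxt => ?_⟩⟩
  · obtain ⟨n, hn⟩ := mem_iUnion.1 (hs hx)
    exact mem_iUnion.2 ⟨n, hsu n ⟨subset_closure hx, hn⟩⟩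
  · exact hut n hx (subset_closure hxt)

theorem normalSpace_iUnion_of_isClosed [NormalSpace X] {F : ℕ → Set X}
    (hF : ∀ n, IsClosed (F n)) : NormalSpace (⋃ n, F n) := by
  have cover : ∀ {C D : Set (⋃ n, F n)}, IsClosed C → IsClosed D → Disjoint C D →
      HasSeparatingCover ((↑) '' C : Set X) ((↑) '' D) := by
    intro C D hC hD hCD
    refine hasSeparatingCover_of_subset_iUnion hF (image_subset_iff.2 fun x _ => x.2) ?_
    rw [disjoint_left]
    rintro x ⟨hxC, hxF⟩ hxD
    have hC' : (⟨x, hxF⟩ : ⋃ n, F n) ∈ C := hC.closure_eq ▸ closure_subtype.2 hxC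
    have hD' : (⟨x, hxF⟩ : ⋃ n, F n) ∈ D := hD.closure_eq ▸ closure_subtype.2 hxD
    exact disjoint_left.1 hCD hC' hD'
  refine ⟨fun A B hA hB hAB => ?_⟩
  have h := (hasSeparatingCovers_iff_separatedNhds.1
    ⟨cover hA hB hAB, cover hB hA hAB.symm⟩).preimage
    (continuous_subtype_val (p := (· ∈ ⋃ n, F n)))
  rwa [preimage_image_eq _ Subtype.val_injective, preimage_image_eq _ Subtype.val_injective] at h

theorem normalSpace_prod_iUnion_of_isClosed [NormalSpace (X × Y)] {s : ℕ → Set X}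
    {t : ℕ → Set Y} (hs : ∀ n, IsClosed (s n)) (ht : ∀ n, IsClosed (t n)) (hs' : Monotone s)
    (ht' : Monotone t) : NormalSpace ((⋃ n, s n) × (⋃ n, t n)) := by
  have := normalSpace_iUnion_of_isClosed fun n => (hs n).prod (ht n)
  rw [iUnion_prod_of_monotone hs' ht'] at this
  exact (Homeomorph.Set.prod _ _).normalSpace

theorem separatedNhds_of_normalSpace_subset {A B K F O G : Set X} [NormalSpace K]
    (hA : IsClosed A) (hB : IsClosed B) (hAB : Disjoint A B) (hF : IsClosed F) (hO : IsOpen O)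
    (hG : IsOpen G) (hOK : O ⊆ K) (hGF : G ⊆ F) (hOG : O ∪ G = univ) (hBO : B ⊆ O)
    (hBF : Disjoint B F) : SeparatedNhds A B := by
  obtain ⟨u, v, hu, hv, hAu, hBv, huv⟩ := normal_separation
    ((hA.union hF).preimage continuous_subtype_val) (hB.preimage continuous_subtype_val)
    ((disjoint_union_left.2 ⟨hAB, hBF.symm⟩).preimage ((↑) : K → X))
  obtain ⟨U, hU, rfl⟩ := isOpen_induced_iff.1 hu
  obtain ⟨V, hV, rfl⟩ := isOpen_induced_iff.1 hv
  refine ⟨U ∩ O ∪ G, (V ∩ O) \ F, (hU.inter hO).union hG, (hV.inter hO).sdiff hF, ?_, ?_, ?_⟩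
  · intro x hx
    rcases hOG.symm.subset (mem_univ x) with hxO | hxG
    · exact Or.inl ⟨hAu (a := ⟨x, hOK hxO⟩) (Or.inl hx), hxO⟩
    · exact Or.inr hxG
  · intro x hx
    exact ⟨⟨hBv (a := ⟨x, hOK (hBO hx)⟩) hx, hBO hx⟩, disjoint_left.1 hBF hx⟩
  · rw [disjoint_left]
    rintro x (⟨hxU, hxO⟩ | hxG) ⟨⟨hxV, -⟩, hxF⟩
    · exact disjoint_left.1 huv (show (⟨x, hOK hxO⟩ : K) ∈ (↑) ⁻¹' U from hxU) hxV
    · exact hxF (hGF hxG)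

end NormalSubspaces

section CountablyCompact

theorem disjoint_fst_image_of_forall_lt_dist {X M : Type*} [PseudoMetricSpace M]
    {A B : Set (X × M)} {ε : ℝ}
    (hgap : ∀ x t s, (x, t) ∈ A → (x, s) ∈ B → ε < dist t s) {c d : M}
    (hcd : dist c d ≤ ε / 2) :
    Disjoint (Prod.fst '' (A ∩ univ ×ˢ Metric.closedBall c (ε / 4)))
      (Prod.fst '' (B ∩ univ ×ˢ Metric.closedBall d (ε / 4))) := by
  rw [disjoint_left]
  rintro z ⟨⟨x, t⟩, ⟨hA, -, ht⟩, hxz⟩ ⟨⟨y, s⟩, ⟨hB, -, hs⟩, hyz⟩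
  obtain rfl := hxz
  obtain rfl := hyz
  have hts : dist t s ≤ ε := calc
    dist t s ≤ dist t c + dist c d + dist d s := dist_triangle4 t c d s
    _ ≤ ε / 4 + ε / 2 + ε / 4 := by
      gcongr
      exacts [ht, by rw [dist_comm]; exact hs]
    _ = ε := by ring
  exact (hgap _ t s hA hB).not_ge hts

variable {X M : Type*} [TopologicalSpace X] [PseudoMetricSpace M] [CompactSpace M]

theorem exists_pos_forall_lt_dist_of_countablyCompactSpace [CountablyCompactSpace X]
    {A B : Set (X × M)}
    (hA : IsClosed A) (hB : IsClosed B) (hAB : Disjoint A B) :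
    ∃ ε > 0, ∀ x t s, (x, t) ∈ A → (x, s) ∈ B → ε < dist t s := by
  set W : ℕ → Set X := fun n =>
    {x | ∀ t s, (x, t) ∈ A → (x, s) ∈ B → 1 / ((n : ℝ) + 1) < dist t s} with hW
  have hW_open : ∀ n, IsOpen (W n) := by
    intro n
    have hWc : (W n)ᶜ = Prod.fst '' {p : X × M × M | (p.1, p.2.1) ∈ A ∧ (p.1, p.2.2) ∈ B ∧
        dist p.2.1 p.2.2 ≤ 1 / ((n : ℝ) + 1)} := by
      ext x
      simp [hW]
    rw [← isClosed_compl_iff, hWc]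
    exact isClosedMap_fst_of_compactSpace _ <|
      (hA.preimage (show Continuous fun p : X × M × M => (p.1, p.2.1) by fun_prop)).inter <|
      (hB.preimage (show Continuous fun p : X × M × M => (p.1, p.2.2) by fun_prop)).inter <|
      isClosed_le (show Continuous fun p : X × M × M => dist p.2.1 p.2.2 by fun_prop)
        continuous_const
  have hW_mono : Monotone W := fun m n hmn x hx t s ht hs =>
    lt_of_le_of_lt (one_div_le_one_div_of_le (by positivity) (by simpa using hmn))
      (hx t s ht hs)
  have hW_cover : univ ⊆ ⋃ n, W n := by
    refine fun x _ => mem_iUnion.2 ?_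
    obtain ⟨δ, hδ, hAB'⟩ := Disjoint.exists_cthickenings
      (s := {t | (x, t) ∈ A}) (t := {s | (x, s) ∈ B})
      (disjoint_left.2 fun t ht hs => disjoint_left.1 hAB ht hs)
      (hA.preimage (Continuous.prodMk_right x)).isCompact
      (hB.preimage (Continuous.prodMk_right x))
    obtain ⟨n, hn⟩ := exists_nat_one_div_lt hδ
    exact ⟨n, fun t s ht hs => hn.trans (not_le.1 fun hts => disjoint_left.1 hAB'
      (Metric.self_subset_cthickening _ ht) (Metric.mem_cthickening_of_dist_le t s δ _ hs hts))⟩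
  obtain ⟨N, hN⟩ := CountablyCompactSpace.isCountablyCompact_univ.elim_directed_cover W hW_open
    hW_cover hW_mono.directed_le
  exact ⟨1 / (N + 1), by positivity, fun x => hN (mem_univ x)⟩

theorem separatedNhds_of_forall_lt_dist [NormalSpace X] {A B : Set (X × M)} (hA : IsClosed A)
    (hB : IsClosed B) {ε : ℝ} (hε : 0 < ε)
    (hgap : ∀ x t s, (x, t) ∈ A → (x, s) ∈ B → ε < dist t s) : SeparatedNhds A B := by
  obtain ⟨net, -, hnet, hcover⟩ := finite_cover_balls_of_compact (isCompact_univ (X := M))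
    (show 0 < ε / 4 by positivity)
  have hclosed {C : Set (X × M)} (hC : IsClosed C) (c : M) :
      IsClosed (Prod.fst '' (C ∩ univ ×ˢ Metric.closedBall c (ε / 4))) :=
    isClosedMap_fst_of_compactSpace _ (hC.inter (isClosed_univ.prod Metric.isClosed_closedBall))
  have hsep : ∀ c d : M, ∃ G H : Set X, IsOpen G ∧ IsOpen H ∧
      Prod.fst '' (A ∩ univ ×ˢ Metric.closedBall c (ε / 4)) ⊆ G ∧
      Prod.fst '' (B ∩ univ ×ˢ Metric.closedBall d (ε / 4)) ⊆ H ∧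
      (dist c d ≤ ε / 2 → Disjoint G H) := by
    intro c d
    by_cases hcd : dist c d ≤ ε / 2
    · obtain ⟨G, H, hG, hH, hAG, hBH, hGH⟩ := normal_separation (hclosed hA c) (hclosed hB d)
        (disjoint_fst_image_of_forall_lt_dist hgap hcd)
      exact ⟨G, H, hG, hH, hAG, hBH, fun _ => hGH⟩
    · exact ⟨univ, univ, isOpen_univ, isOpen_univ, subset_univ _, subset_univ _,
        fun h => absurd h hcd⟩
  choose G H hG hH hAG hBH hGH using hsep
  refine ⟨⋃ c ∈ net, (⋂ d ∈ net, G c d) ×ˢ Metric.ball c (ε / 4),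
    ⋃ d ∈ net, (⋂ c ∈ net, H c d) ×ˢ Metric.ball d (ε / 4),
    isOpen_biUnion fun c _ => (hnet.isOpen_biInter fun d _ => hG c d).prod Metric.isOpen_ball,
    isOpen_biUnion fun d _ => (hnet.isOpen_biInter fun c _ => hH c d).prod Metric.isOpen_ball,
    ?_, ?_, ?_⟩
  · rintro ⟨x, t⟩ hxt
    obtain ⟨c, hc, htc⟩ := mem_iUnion₂.1 (hcover (mem_univ t))
    exact mem_iUnion₂.2 ⟨c, hc, mem_iInter₂.2 fun d _ =>
      hAG c d ⟨(x, t), ⟨hxt, mem_univ x, Metric.ball_subset_closedBall htc⟩, rfl⟩, htc⟩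
  · rintro ⟨x, s⟩ hxs
    obtain ⟨d, hd, hsd⟩ := mem_iUnion₂.1 (hcover (mem_univ s))
    exact mem_iUnion₂.2 ⟨d, hd, mem_iInter₂.2 fun c _ =>
      hBH c d ⟨(x, s), ⟨hxs, mem_univ x, Metric.ball_subset_closedBall hsd⟩, rfl⟩, hsd⟩
  · rw [disjoint_left]
    rintro ⟨x, t⟩ hU hV
    obtain ⟨c, hc, hxG, htc⟩ := mem_iUnion₂.1 hU
    obtain ⟨d, hd, hxH, htd⟩ := mem_iUnion₂.1 hV
    have hcd : dist c d ≤ ε / 2 := by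
      have := dist_triangle_left c d t
      rw [Metric.mem_ball] at htc htd
      linarith
    exact disjoint_left.1 (hGH c d hcd) (mem_iInter₂.1 hxG d hd) (mem_iInter₂.1 hxH c hc)

theorem normalSpace_prod_of_countablyCompactSpace [NormalSpace X] [CountablyCompactSpace X]
    (Y : Type*) [TopologicalSpace Y] [CompactSpace Y] [TopologicalSpace.MetrizableSpace Y] :
    NormalSpace (X × Y) := by
  let := TopologicalSpace.metrizableSpaceMetric Y
  refine ⟨fun A B hA hB hAB => ?_⟩
  obtain ⟨ε, hε, hgap⟩ := exists_pos_forall_lt_dist_of_countablyCompactSpace hA hB hAB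
  exact separatedNhds_of_forall_lt_dist hA hB hε hgap

end CountablyCompact

theorem Prod.Lex.exists_isGLB {α β : Type*} [LinearOrder α] [WellFoundedLT α] [LinearOrder β]
    (hβ : ∀ t : Set β, t.Nonempty → ∃ b, IsGLB t b) {s : Set (α ×ₗ β)} (hs : s.Nonempty) :
    ∃ x, IsGLB s x := by
  obtain ⟨_, ⟨x₀, hx₀, rfl⟩, hmin⟩ := wellFounded_lt.has_min _ (hs.image fun x => (ofLex x).1)
  obtain ⟨b, hb⟩ := hβ {b | toLex ((ofLex x₀).1, b) ∈ s} ⟨(ofLex x₀).2, hx₀⟩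
  refine ⟨toLex ((ofLex x₀).1, b), fun y hy => ?_, fun v hv => ?_⟩
  · rcases (not_lt.1 (hmin _ ⟨y, hy, rfl⟩)).lt_or_eq with h | h
    · exact Prod.Lex.le_iff.2 (Or.inl h)
    · exact Prod.Lex.le_iff.2 (Or.inr ⟨h, hb.1 (by simpa [h] using hy)⟩)
  · rcases Prod.Lex.le_iff.1 (hv hx₀) with h | ⟨h, -⟩
    · exact Prod.Lex.le_iff.2 (Or.inl h)
    · refine Prod.Lex.le_iff.2 (Or.inr ⟨h, hb.2 fun c hc => ?_⟩)
      exact ((Prod.Lex.le_iff.1 (hv hc)).resolve_left (by simp [h])).2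

theorem Set.Ico.exists_isGLB {α : Type*} [ConditionallyCompleteLinearOrder α] {a b : α}
    (t : Set (Ico a b)) (ht : t.Nonempty) : ∃ c, IsGLB t c := by
  have : Inhabited (Ico a b) := ⟨ht.some⟩
  exact ⟨sInf t, isGLB_csInf ht ⟨⟨a, le_rfl, ht.some.2.1.trans_lt ht.some.2.2⟩, fun x _ => x.2.1⟩⟩

open Classical in
/-- The infimum of the empty set is taken to be `⊥`, which makes `sSup` of an unbounded set
agree with `sSup ∅ = ⊥`. -/
abbrev ConditionallyCompleteLinearOrder.ofExistsIsGLB (α : Type*) [LinearOrder α]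
    [OrderBot α] (h : ∀ s : Set α, s.Nonempty → ∃ a, IsGLB s a) :
    ConditionallyCompleteLinearOrder α :=
  letI : InfSet α := ⟨fun s => if hs : s.Nonempty then (h s hs).choose else ⊥⟩
  have sInf_of_nonempty (s : Set α) (hs : s.Nonempty) : sInf s = (h s hs).choose := dif_pos hs
  have sInf_empty : sInf (∅ : Set α) = ⊥ := dif_neg Set.not_nonempty_empty
  have sInf_univ : sInf (univ : Set α) = ⊥ := by
    rw [sInf_of_nonempty _ univ_nonempty]
    exact le_bot_iff.1 ((h univ univ_nonempty).choose_spec.1 (mem_univ ⊥))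
  { (inferInstance : LinearOrder α), LinearOrder.toLattice,
    conditionallyCompleteLatticeOfLatticeOfsInf α fun s _ hs =>
      sInf_of_nonempty s hs ▸ (h s hs).choose_spec with
    csSup_of_not_bddAbove := fun s hs => by
      change sInf (upperBounds s) = sInf (upperBounds ∅)
      rw [not_nonempty_iff_eq_empty.1 hs, upperBounds_empty, sInf_univ, sInf_empty]
    csInf_of_not_bddBelow := fun s hs => (hs (OrderBot.bddBelow s)).elim }

theorem exists_diag_mem_of_forall_Ici_prod {α : Type*} [ConditionallyCompleteLinearOrder α]
    [TopologicalSpace α] [OrderTopology α] [Nonempty α]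
    (hα : ∀ r : ℕ → α, BddAbove (range r)) {A B : Set (α × α)} (hA : IsClosed A)
    (hB : IsClosed B) (hA' : ∀ c, (A ∩ Ici c ×ˢ Ici c).Nonempty)
    (hB' : ∀ c, (B ∩ Ici c ×ˢ Ici c).Nonempty) : ∃ s, (s, s) ∈ A ∧ (s, s) ∈ B := by
  choose a haA ha using hA'
  choose b hbB hb using hB'
  -- The witnesses `a (r n)` and `b (r n)` lie in `[r n, r (n + 1)]²`, so both converge to the
  -- diagonal point at `⨆ n, r n`.
  set g : α → α := fun c => max (max (a c).1 (a c).2) (max (b c).1 (b c).2) with hg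
  set r : ℕ → α := fun n => g^[n] (Classical.arbitrary α)
  have hr_succ (n : ℕ) : r (n + 1) = g (r n) := Function.iterate_succ_apply' g n _
  have hr_mono : Monotone r := monotone_nat_of_le_succ fun n =>
    hr_succ n ▸ (ha (r n)).1.trans (by simp [hg])
  have hlim := tendsto_atTop_ciSup hr_mono (hα r)
  have hlim' : Tendsto (fun n => g (r n)) atTop (𝓝 (⨆ n, r n)) :=
    (hlim.comp (tendsto_add_atTop_nat 1)).congr hr_succ
  have squeeze (p : α → α × α) (hp : ∀ c, p c ∈ Ici c ×ˢ Ici c)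
      (hpg : ∀ c, (p c).1 ≤ g c ∧ (p c).2 ≤ g c) :
      Tendsto (fun n => p (r n)) atTop (𝓝 (⨆ n, r n, ⨆ n, r n)) :=
    (tendsto_of_tendsto_of_tendsto_of_le_of_le hlim hlim' (fun n => (hp _).1)
      fun n => (hpg _).1).prodMk_nhds
    (tendsto_of_tendsto_of_tendsto_of_le_of_le hlim hlim' (fun n => (hp _).2)
      fun n => (hpg _).2)
  exact ⟨⨆ n, r n,
    hA.mem_of_tendsto (squeeze a ha fun c => by simp [hg]) (.of_forall fun n => haA _),
    hB.mem_of_tendsto (squeeze b hb fun c => by simp [hg]) (.of_forall fun n => hbB _)⟩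

theorem EReal.iUnion_Icc_neg_natCast : ⋃ n : ℕ, Icc (-n : EReal) n = range ((↑) : ℝ → EReal) := by
  ext x
  simp only [mem_iUnion, mem_Icc, mem_range]
  constructor
  · rintro ⟨n, hnx, hxn⟩
    have htop : x ≠ ⊤ := ne_top_of_le_ne_top (EReal.natCast_ne_top n) hxn
    have hbot : x ≠ ⊥ := ne_bot_of_le_ne_bot (by simpa using EReal.natCast_ne_top n) hnx
    exact ⟨x.toReal, EReal.coe_toReal htop hbot⟩
  · rintro ⟨r, rfl⟩
    obtain ⟨n, hn⟩ := exists_nat_ge |r|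
    refine ⟨n, ?_, ?_⟩
    · simpa using EReal.coe_le_coe_iff.2 (neg_le_of_abs_le hn)
    · exact_mod_cast le_of_abs_le hn

theorem EReal.monotone_Icc_neg_natCast : Monotone fun n : ℕ => Icc (-n : EReal) n :=
  fun m n h => Icc_subset_Icc (by simpa using h) (by simpa using h)

theorem normalSpace_iUnion_prod_real {X : Type*} [TopologicalSpace X] [NormalSpace X]
    [CountablyCompactSpace X] {s : ℕ → Set X} (hs : ∀ n, IsClosed (s n)) (hs' : Monotone s) :
    NormalSpace ((⋃ n, s n) × ℝ) :=
  have := normalSpace_prod_of_countablyCompactSpace (X := X) EReal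
  have := normalSpace_prod_iUnion_of_isClosed hs (fun _ => isClosed_Icc) hs'
    EReal.monotone_Icc_neg_natCast
  ((Homeomorph.refl _).prodCongr ((Homeomorph.setCongr EReal.iUnion_Icc_neg_natCast).trans
    EReal.isOpenEmbedding_coe.isEmbedding.toHomeomorph.symm)).normalSpace

theorem omega1_eq_omega_one : omega1 = Ordinal.omega 1 := Cardinal.ord_aleph 1

theorem succ_lt_omega1 {o : Ordinal} (ho : o < omega1) : Order.succ o < omega1 := by
  rw [omega1_eq_omega_one] at ho ⊢
  exact (Cardinal.isSuccLimit_omega 1).succ_lt ho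

theorem countable_Iic_omega1 (a : Omega1) : (Iic a).Countable := by
  have h : (Iio (Order.succ (a : Ordinal))).Countable := by
    rw [← Cardinal.le_aleph0_iff_set_countable, Cardinal.mk_Iio_ordinal, Cardinal.lift_le_aleph0,
      ← Cardinal.lt_aleph_one_iff, ← Cardinal.lt_omega_iff_card_lt, ← omega1_eq_omega_one]
    exact succ_lt_omega1 a.2
  exact (h.preimage Subtype.val_injective).mono fun x (hx : x ≤ a) =>
    show (x : Ordinal) < _ from Order.lt_succ_of_le hx

namespace ClosedLongRay

universe u v

instance : OrderBot ClosedLongRay where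
  bot := longRayZero
  bot_le x := by
    rcases (zero_le : (0 : Ordinal) ≤ (ofLex x).1).lt_or_eq with h | h
    · exact Prod.Lex.le_iff.2 (Or.inl h)
    · exact Prod.Lex.le_iff.2 (Or.inr ⟨Subtype.ext h, (ofLex x).2.2.1⟩)

instance : ConditionallyCompleteLinearOrder ClosedLongRay :=
  .ofExistsIsGLB _ fun _ hs => Prod.Lex.exists_isGLB Set.Ico.exists_isGLB hs

theorem isCompact_Iic (b : ClosedLongRay) : IsCompact (Iic b) :=
  Icc_bot (a := b) ▸ isCompact_Icc

theorem bddAbove_of_countable {s : Set ClosedLongRay} (hs : s.Countable) : BddAbove s := by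
  have := hs.to_subtype
  have hlt : (⨆ x : s, Order.succ ((ofLex x.1).1 : Ordinal)) < omega1 :=
    (Ordinal.iSup_lt_omega_one fun x =>
      (succ_lt_omega1 (ofLex x.1).1.2).trans_eq omega1_eq_omega_one).trans_eq
      omega1_eq_omega_one.symm
  refine ⟨toLex (⟨_, hlt⟩, ⊥), fun x hx => (Prod.Lex.lt_iff.2 (Or.inl ?_)).le⟩
  exact (Order.lt_succ ((ofLex x).1 : Ordinal)).trans_le
    (le_ciSup (f := fun x : s => Order.succ ((ofLex x.1).1 : Ordinal))
      Ordinal.bddAbove_of_small ⟨x, hx⟩)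

instance : CountablyCompactSpace ClosedLongRay where
  isCountablyCompact_univ := IsCountablyCompact.of_seq_clusterPt fun x _ => by
    obtain ⟨b, hb⟩ := bddAbove_of_countable (countable_range x)
    obtain ⟨a, -, ha⟩ := (isCompact_Iic b).isCountablyCompact.seq_clusterPt x
      (.of_forall fun n => hb ⟨n, rfl⟩)
    exact ⟨a, mem_univ a, ha⟩

theorem exists_rat_snd_mem_Ioo {u v : ClosedLongRay} (huv : u < v) :
    ∃ x ∈ Ioo u v, ((ofLex x).2 : ℝ) ∈ range ((↑) : ℚ → ℝ) := by
  obtain ⟨q, huq, hqv⟩ : ∃ q : ℚ, ((ofLex u).2 : ℝ) < q ∧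
      (q : ℝ) < if (ofLex u).1 = (ofLex v).1 then ((ofLex v).2 : ℝ) else 1 := by
    refine exists_rat_btwn ?_
    split_ifs with h
    · exact ((Prod.Lex.lt_iff.1 huv).resolve_left h.not_lt).2
    · exact (ofLex u).2.2.2
  have hq1 : (q : ℝ) < 1 := by
    split_ifs at hqv
    exacts [hqv.trans (ofLex v).2.2.2, hqv]
  refine ⟨toLex ((ofLex u).1, ⟨q, (ofLex u).2.2.1.trans huq.le, hq1⟩),
    ⟨Prod.Lex.lt_iff.2 (Or.inr ⟨rfl, huq⟩), Prod.Lex.lt_iff.2 ?_⟩, q, rfl⟩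
  rcases (Prod.Lex.monotone_fst_ofLex huv.le).lt_or_eq with h | h
  · exact Or.inl h
  · exact Or.inr ⟨h, show (q : ℝ) < (ofLex v).2 by simpa [h] using hqv⟩

instance separableSpace_Iic (b : ClosedLongRay) : TopologicalSpace.SeparableSpace (Iic b) := by
  rcases subsingleton_or_nontrivial (Iic b) with _ | _
  · infer_instance
  refine ⟨⟨{x : Iic b | ((ofLex x.1).2 : ℝ) ∈ range ((↑) : ℚ → ℝ)}, ?_,
    dense_iff_exists_between.2 fun u v huv => ?_⟩⟩
  · refine MapsTo.countable_of_injOn (f := fun x : Iic b => ((ofLex x.1).1, ((ofLex x.1).2 : ℝ)))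
      (t := Iic (ofLex b).1 ×ˢ range ((↑) : ℚ → ℝ))
      (fun x hx => ⟨Prod.Lex.monotone_fst_ofLex x.2, hx⟩) (fun x _ y _ h => ?_)
      ((countable_Iic_omega1 _).prod (countable_range _))
    simp only [Prod.mk.injEq] at h
    exact Subtype.ext (ofLex.injective (Prod.ext h.1 (Subtype.ext h.2)))
  · obtain ⟨x, ⟨hux, hxv⟩, hx⟩ := exists_rat_snd_mem_Ioo (show u.1 < v.1 from huv)
    exact ⟨⟨x, hxv.le.trans v.2⟩, hx, hux, hxv⟩

theorem normalSpace_prod_Iic (b : ClosedLongRay) : NormalSpace (ClosedLongRay × Iic b) :=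
  have : CompactSpace (Iic b) := isCompact_iff_compactSpace.1 (isCompact_Iic b)
  have := SecondCountableTopology.of_separableSpace_orderTopology (Iic b)
  normalSpace_prod_of_countablyCompactSpace _

theorem exists_disjoint_Ici_prod {A B : Set (ClosedLongRay × ClosedLongRay)}
    (hA : IsClosed A) (hB : IsClosed B) (hAB : Disjoint A B) :
    ∃ b, Disjoint A (Ici b ×ˢ Ici b) ∨ Disjoint B (Ici b ×ˢ Ici b) := by
  by_contra! h
  obtain ⟨s, hsA, hsB⟩ := exists_diag_mem_of_forall_Ici_prod
    (fun r => bddAbove_of_countable (countable_range r)) hA hB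
    (fun c => not_disjoint_iff_nonempty_inter.1 (h c).1)
    (fun c => not_disjoint_iff_nonempty_inter.1 (h c).2)
  exact disjoint_left.1 hAB hsA hsB

theorem separatedNhds_of_forall_snd_le {A B : Set (ClosedLongRay × ClosedLongRay)}
    (hA : IsClosed A) (hB : IsClosed B) (hAB : Disjoint A B) {b : ClosedLongRay}
    (hBb : ∀ p ∈ B, p.2 ≤ b) : SeparatedNhds A B := by
  obtain ⟨b₁, hb₁⟩ := exists_gt b
  obtain ⟨b₂, hb₂⟩ := exists_gt b₁
  have : NormalSpace (univ ×ˢ Iic b₂ : Set (ClosedLongRay × ClosedLongRay)) :=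
    have := normalSpace_prod_Iic b₂
    ((Homeomorph.Set.prod _ _).trans
      ((Homeomorph.Set.univ _).prodCongr (Homeomorph.refl _))).symm.normalSpace
  refine separatedNhds_of_normalSpace_subset (K := univ ×ˢ Iic b₂) (F := Prod.snd ⁻¹' Ici b₁)
    (O := Prod.snd ⁻¹' Iio b₂) (G := Prod.snd ⁻¹' Ioi b₁) hA hB hAB
    (isClosed_Ici.preimage continuous_snd) (isOpen_Iio.preimage continuous_snd)
    (isOpen_Ioi.preimage continuous_snd) (fun p (hp : p.2 < b₂) => ⟨mem_univ _, hp.le⟩)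
    (fun p (hp : b₁ < p.2) => hp.le) ?_ (fun p hp => (hBb p hp).trans_lt (hb₁.trans hb₂))
    (disjoint_left.2 fun p hp hp' => (hBb p hp).not_gt (hb₁.trans_le hp'))
  exact eq_univ_of_forall fun p => (lt_or_ge p.2 b₂).imp id hb₂.trans_le

theorem separatedNhds_of_forall_fst_le {A B : Set (ClosedLongRay × ClosedLongRay)}
    (hA : IsClosed A) (hB : IsClosed B) (hAB : Disjoint A B) {b : ClosedLongRay}
    (hBb : ∀ p ∈ B, p.1 ≤ b) : SeparatedNhds A B := by
  simpa [preimage_preimage] using (separatedNhds_of_forall_snd_le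
    (hA.preimage continuous_swap) (hB.preimage continuous_swap) (hAB.preimage Prod.swap)
    fun p hp => hBb _ hp).preimage continuous_swap

theorem separatedNhds_of_disjoint_Ici_prod {A B : Set (ClosedLongRay × ClosedLongRay)}
    (hA : IsClosed A) (hB : IsClosed B) (hAB : Disjoint A B) {b : ClosedLongRay}
    (hBb : Disjoint B (Ici b ×ˢ Ici b)) : SeparatedNhds A B := by
  refine SeparatedNhds.mono (s₂ := A)
    (t₂ := B ∩ Prod.fst ⁻¹' Iic b ∪ B ∩ Prod.snd ⁻¹' Iic b) ?_ subset_rfl fun p hp => ?_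
  · exact (separatedNhds_of_forall_fst_le hA (hB.inter (isClosed_Iic.preimage continuous_fst))
      (hAB.mono_right inter_subset_left) fun p hp => hp.2).union_right
      (separatedNhds_of_forall_snd_le hA (hB.inter (isClosed_Iic.preimage continuous_snd))
      (hAB.mono_right inter_subset_left) fun p hp => hp.2)
  · have : ¬(b ≤ p.1 ∧ b ≤ p.2) := fun h => disjoint_left.1 hBb hp h
    rcases not_and_or.1 this with h | h
    exacts [Or.inl ⟨hp, (not_le.1 h).le⟩, Or.inr ⟨hp, (not_le.1 h).le⟩]

theorem normalSpace_prod_self : NormalSpace (ClosedLongRay.{u} × ClosedLongRay.{u}) := by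
  refine ⟨fun A B hA hB hAB => ?_⟩
  obtain ⟨b, hb | hb⟩ := exists_disjoint_Ici_prod hA hB hAB
  · exact (separatedNhds_of_disjoint_Ici_prod hB hA hAB.symm hb).symm
  · exact separatedNhds_of_disjoint_Ici_prod hA hB hAB hb

def omega1OrderIso : Omega1.{u} ≃o Omega1.{v} :=
  have h : Ordinal.lift.{v} (@Ordinal.type omega1.{u}.ToType (· < ·) _) =
      Ordinal.lift.{u} (@Ordinal.type omega1.{v}.ToType (· < ·) _) := by
    simp only [Ordinal.type_toType, omega1_eq_omega_one, Ordinal.lift_omega, Ordinal.lift_one]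
  Ordinal.ToType.mk.trans <|
    (OrderIso.ofRelIsoLT (Classical.choice (Ordinal.lift_type_eq.{u, v, 0}.1 h))).trans
      Ordinal.ToType.mk.symm

def homeomorphUniv : ClosedLongRay.{u} ≃ₜ ClosedLongRay.{v} :=
  (Prod.Lex.prodLexCongr omega1OrderIso (OrderIso.refl _)).toHomeomorph

instance : NormalSpace (ClosedLongRay.{u} × ClosedLongRay.{v}) :=
  have := normalSpace_prod_self.{u}
  ((Homeomorph.refl _).prodCongr homeomorphUniv).normalSpace

def approxBot (n : ℕ) : ClosedLongRay :=
  toLex (⟨0, omega1_pos⟩, ⟨1 / (n + 2), by positivity, by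
    rw [div_lt_one (by positivity)]
    linarith [(n.cast_nonneg : (0 : ℝ) ≤ n)]⟩)

theorem monotone_Ici_approxBot : Monotone fun n => Ici (approxBot n) := fun m n h =>
  Ici_subset_Ici.2 <| Prod.Lex.le_iff.2 <| Or.inr ⟨rfl, show (1 : ℝ) / (n + 2) ≤ 1 / (m + 2) by
    gcongr⟩

theorem iUnion_Ici_approxBot : ⋃ n, Ici (approxBot n) = {x | x ≠ longRayZero} := by
  ext x
  simp only [mem_iUnion, mem_Ici, mem_ofPred_eq]
  constructor
  · rintro ⟨n, hn⟩ rfl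
    have h := congrArg (fun x => ((ofLex x).2 : ℝ)) (le_bot_iff.1 hn)
    exact (show (0 : ℝ) < 1 / (n + 2) by positivity).ne' h
  · intro hx
    rcases Prod.Lex.lt_iff.1 (bot_lt_iff_ne_bot.2 hx) with h | ⟨h, h₂⟩
    · exact ⟨0, (Prod.Lex.lt_iff.2 (Or.inl (show (ofLex (approxBot 0)).1 < _ from h))).le⟩
    · obtain ⟨n, hn⟩ := exists_nat_one_div_lt (show (0 : ℝ) < (ofLex x).2 from h₂)
      refine ⟨n, Prod.Lex.le_iff.2 (Or.inr ⟨h, ?_⟩)⟩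
      show (1 : ℝ) / (n + 2) ≤ (ofLex x).2
      exact le_trans (by gcongr; norm_num) hn.le

instance : NormalSpace (ClosedLongRay × ℝ) :=
  have := normalSpace_iUnion_prod_real (X := ClosedLongRay) (fun _ => isClosed_univ)
    monotone_const
  (((Homeomorph.setCongr (iUnion_const (ι := ℕ) univ)).trans (Homeomorph.Set.univ _)).prodCongr
    (Homeomorph.refl ℝ)).normalSpace

instance : NormalSpace (LongRayPlus × ℝ) :=
  have := normalSpace_iUnion_prod_real (fun _ => isClosed_Ici) monotone_Ici_approxBot
  ((Homeomorph.setCongr iUnion_Ici_approxBot).prodCongr (Homeomorph.refl ℝ)).normalSpace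

instance : NormalSpace (LongRayPlus.{u} × LongRayPlus.{v}) :=
  have := normalSpace_prod_iUnion_of_isClosed (X := ClosedLongRay.{u}) (Y := ClosedLongRay.{v})
    (fun _ => isClosed_Ici) (fun _ => isClosed_Ici) monotone_Ici_approxBot
    monotone_Ici_approxBot
  ((Homeomorph.setCongr iUnion_Ici_approxBot).prodCongr
    (Homeomorph.setCongr iUnion_Ici_approxBot)).normalSpace

end ClosedLongRay

/-- The products `L₊ × ℝ`, `L_{≥0} × ℝ`, `L₊ × L₊` and `L_{≥0} × L_{≥0}` are all normal
(Hausdorff) spaces. -/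
theorem longRay_products_normal :
    (T2Space (LongRayPlus × ℝ) ∧ NormalSpace (LongRayPlus × ℝ)) ∧
    (T2Space (ClosedLongRay × ℝ) ∧ NormalSpace (ClosedLongRay × ℝ)) ∧
    (T2Space (LongRayPlus × LongRayPlus) ∧ NormalSpace (LongRayPlus × LongRayPlus)) ∧
    (T2Space (ClosedLongRay × ClosedLongRay) ∧
      NormalSpace (ClosedLongRay × ClosedLongRay)) :=
  ⟨⟨inferInstance, inferInstance⟩, ⟨inferInstance, inferInstance⟩,
    ⟨inferInstance, inferInstance⟩, ⟨inferInstance, inferInstance⟩⟩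
end
end
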